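/- arXiv:2207.02686 — 4 statements merged into one kernel-verified Lean document; each statement's English description precedes it below -/
import Mathlib

section
/- A distributive lattice with bottom is a generalized Boolean algebra if and only if every prime filter is an ultrafilter. -/
variable {D : Type*} [DistribLattice D] [OrderBot D]

/-- A filter: nonempty, closed under binary meets, upward closed. -/
def IsLFilter (F : Set D) : Prop :=
  F.Nonempty ∧ (∀ x ∈ F, ∀ y ∈ F, x ⊓ y ∈ F) ∧ (∀ x ∈ F, ∀ y : D, x ≤ y → y ∈ F)

/-- Proper filter: does not contain ⊥. -/
def IsProperLFilter (F : Set D) : Prop := IsLFilter F ∧ (⊥ : D) ∉ F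

/-- Prime filter: proper and `a ⊔ b ∈ F` implies `a ∈ F` or `b ∈ F`. -/
def IsPrimeLFilter (F : Set D) : Prop :=
  IsProperLFilter F ∧ ∀ a b : D, a ⊔ b ∈ F → a ∈ F ∨ b ∈ F

/-- Ultrafilter: maximal proper filter. -/
def IsUltraLFilter (F : Set D) : Prop :=
  IsProperLFilter F ∧ ∀ G : Set D, IsProperLFilter G → F ⊆ G → F = G

/-- Separation: a filter disjoint from a (set-theoretic) ideal extends to a prime
filter still disjoint from the ideal. -/
lemma lfilter_separation (I' Fa : Set D)
    (hI'bot : (⊥ : D) ∈ I')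
    (hI'down : ∀ z ∈ I', ∀ w : D, w ≤ z → w ∈ I')
    (hI'join : ∀ z ∈ I', ∀ w ∈ I', z ⊔ w ∈ I')
    (hFa : IsLFilter Fa)
    (hdisj : ∀ z ∈ Fa, z ∉ I') :
    ∃ P : Set D, IsPrimeLFilter P ∧ Fa ⊆ P ∧ ∀ z ∈ P, z ∉ I' := by
  set S : Set (Set D) := {G | IsLFilter G ∧ Fa ⊆ G ∧ ∀ z ∈ G, z ∉ I'} with hS
  have hchain : ∀ c ⊆ S, IsChain (· ⊆ ·) c → c.Nonempty →
      ∃ ub ∈ S, ∀ s ∈ c, s ⊆ ub := by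
    intro c hcS hc ⟨G₀, hG₀⟩
    refine ⟨⋃₀ c, ⟨⟨?_, ?_, ?_⟩, ?_, ?_⟩, fun s hs => Set.subset_sUnion_of_mem hs⟩
    · obtain ⟨x, hx⟩ := (hcS hG₀).1.1
      exact ⟨x, Set.mem_sUnion.2 ⟨G₀, hG₀, hx⟩⟩
    · rintro x ⟨G₁, hG₁, hx⟩ y ⟨G₂, hG₂, hy⟩
      rcases hc.total hG₁ hG₂ with h | h
      · exact Set.mem_sUnion.2 ⟨G₂, hG₂, (hcS hG₂).1.2.1 x (h hx) y hy⟩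
      · exact Set.mem_sUnion.2 ⟨G₁, hG₁, (hcS hG₁).1.2.1 x hx y (h hy)⟩
    · rintro x ⟨G₁, hG₁, hx⟩ y hxy
      exact Set.mem_sUnion.2 ⟨G₁, hG₁, (hcS hG₁).1.2.2 x hx y hxy⟩
    · exact fun z hz => Set.mem_sUnion.2 ⟨G₀, hG₀, (hcS hG₀).2.1 hz⟩
    · rintro z ⟨G₁, hG₁, hz⟩
      exact (hcS hG₁).2.2 z hz
  obtain ⟨M, hFaM, hM⟩ := zorn_subset_nonempty S hchain Fa ⟨hFa, le_refl _, hdisj⟩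
  obtain ⟨⟨hMne, hMmeet, hMup⟩, hFaM', hMI⟩ := hM.prop
  have hMbot : (⊥ : D) ∉ M := fun h => hMI ⊥ h hI'bot
  refine ⟨M, ⟨⟨⟨hMne, hMmeet, hMup⟩, hMbot⟩, ?_⟩, hFaM, hMI⟩
  intro a b hab
  by_contra hcon
  push_neg at hcon
  obtain ⟨ha, hb⟩ := hcon
  -- the filter generated by M and an element t
  have key : ∀ t : D, t ∉ M → ∃ m ∈ M, ∃ i ∈ I', m ⊓ t ≤ i := by
    intro t ht
    by_contra hno
    push_neg at hno
    set G : Set D := {z | ∃ m ∈ M, m ⊓ t ≤ z} with hG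
    have hGS : G ∈ S := by
      refine ⟨⟨?_, ?_, ?_⟩, ?_, ?_⟩
      · obtain ⟨m, hm⟩ := hMne
        exact ⟨t, m, hm, inf_le_right⟩
      · rintro x ⟨m₁, hm₁, h₁⟩ y ⟨m₂, hm₂, h₂⟩
        exact ⟨m₁ ⊓ m₂, hMmeet m₁ hm₁ m₂ hm₂, by
          calc m₁ ⊓ m₂ ⊓ t ≤ (m₁ ⊓ t) ⊓ (m₂ ⊓ t) := by
                simp only [le_inf_iff]
                constructor
                · exact ⟨inf_le_left.trans inf_le_left, inf_le_right⟩
                · exact ⟨inf_le_left.trans inf_le_right, inf_le_right⟩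
            _ ≤ x ⊓ y := inf_le_inf h₁ h₂⟩
      · rintro x ⟨m, hm, h⟩ y hxy
        exact ⟨m, hm, h.trans hxy⟩
      · intro z hz
        exact ⟨z, hFaM hz, inf_le_left⟩
      · rintro z ⟨m, hm, h⟩ hzI
        exact hno m hm z hzI h
    have hMG : M ⊆ G := fun m hm => ⟨m, hm, inf_le_left⟩
    have : M = G := hM.eq_of_subset hGS hMG
    obtain ⟨m, hm⟩ := hMne
    exact ht (this ▸ (⟨m, hm, inf_le_right⟩ : t ∈ G))
  obtain ⟨m₁, hm₁, i₁, hi₁, h₁⟩ := key a ha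
  obtain ⟨m₂, hm₂, i₂, hi₂, h₂⟩ := key b hb
  have hm : m₁ ⊓ m₂ ⊓ (a ⊔ b) ∈ M :=
    hMmeet _ (hMmeet m₁ hm₁ m₂ hm₂) _ hab
  have hle : m₁ ⊓ m₂ ⊓ (a ⊔ b) ≤ i₁ ⊔ i₂ := by
    rw [inf_sup_left]
    apply sup_le
    · exact le_sup_of_le_left ((inf_le_inf_right a (inf_le_left)).trans h₁)
    · exact le_sup_of_le_right ((inf_le_inf_right b (inf_le_right)).trans h₂)
  exact hMI _ hm (hI'down _ (hI'join i₁ hi₁ i₂ hi₂) _ hle)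

/-- A distributive lattice with bottom is relatively complemented (i.e. a generalized
Boolean algebra) if and only if every prime filter is an ultrafilter. -/
theorem stmt9 :
    (∀ a b : D, b ≤ a → ∀ x : D, b ≤ x → x ≤ a →
        ∃ y : D, b ≤ y ∧ y ≤ a ∧ x ⊓ y = b ∧ x ⊔ y = a) ↔
    (∀ F : Set D, IsPrimeLFilter F → IsUltraLFilter F) := by
  constructor
  · -- relatively complemented → prime filters are ultrafilters
    intro hC F hF
    obtain ⟨⟨⟨hFne, hFmeet, hFup⟩, hFbot⟩, hFprime⟩ := hF
    refine ⟨⟨⟨hFne, hFmeet, hFup⟩, hFbot⟩, ?_⟩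
    intro G ⟨⟨hGne, hGmeet, hGup⟩, hGbot⟩ hFG
    refine Set.Subset.antisymm hFG ?_
    intro z hz
    obtain ⟨f, hf⟩ := hFne
    obtain ⟨y, -, hyf, hmeet, hjoin⟩ := hC f ⊥ bot_le (f ⊓ z) bot_le inf_le_left
    rcases hFprime (f ⊓ z) y (by rw [hjoin]; exact hf) with h | h
    · exact hFup _ h z inf_le_right
    · -- y ∈ F ⊆ G and z ∈ G, but y ⊓ z = ⊥ : contradiction with G proper
      have hyz : y ⊓ z = ⊥ := by
        apply le_antisymm _ bot_le
        calc y ⊓ z ≤ (f ⊓ z) ⊓ y := by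
              simp only [le_inf_iff]
              exact ⟨⟨inf_le_left.trans hyf, inf_le_right⟩, inf_le_left⟩
          _ = ⊥ := hmeet
      exact absurd (hyz ▸ hGmeet y (hFG h) z hz) hGbot
  · -- prime filters ultrafilters → relatively complemented
    intro hU a b hba x hbx hxa
    -- first find a "sectional" complement z of x in [⊥, a]
    have sec : ∃ z : D, x ⊓ z = ⊥ ∧ x ⊔ z = a := by
      by_contra hno
      push_neg at hno
      set I' : Set D := {z | ∃ i : D, i ⊓ x = ⊥ ∧ z ≤ i ⊔ x} with hI'
      set Fa : Set D := {z | a ≤ x ⊔ z} with hFa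
      have hI'bot : (⊥ : D) ∈ I' := ⟨⊥, bot_inf_eq x, bot_le⟩
      have hI'down : ∀ z ∈ I', ∀ w : D, w ≤ z → w ∈ I' := by
        rintro z ⟨i, hi, hz⟩ w hw
        exact ⟨i, hi, hw.trans hz⟩
      have hI'join : ∀ z ∈ I', ∀ w ∈ I', z ⊔ w ∈ I' := by
        rintro z ⟨i₁, hi₁, hz⟩ w ⟨i₂, hi₂, hw⟩
        refine ⟨i₁ ⊔ i₂, ?_, ?_⟩
        · rw [inf_sup_right, hi₁, hi₂, sup_idem]
        · calc z ⊔ w ≤ (i₁ ⊔ x) ⊔ (i₂ ⊔ x) := sup_le_sup hz hw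
            _ = (i₁ ⊔ i₂) ⊔ x := by rw [sup_sup_sup_comm, sup_idem]
      have hFaF : IsLFilter Fa := by
        refine ⟨⟨a, le_sup_right⟩, ?_, ?_⟩
        · intro z₁ h₁ z₂ h₂
          show a ≤ x ⊔ (z₁ ⊓ z₂)
          rw [sup_inf_left]
          exact le_inf h₁ h₂
        · intro z₁ h₁ z₂ h₂
          exact le_trans h₁ (sup_le_sup_left h₂ x)
      have hdisj : ∀ z ∈ Fa, z ∉ I' := by
        rintro z hz ⟨i, hi, hzi⟩
        refine hno (i ⊓ a) ?_ ?_
        · rw [← inf_assoc, inf_comm x i, hi, bot_inf_eq]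
        · have hax : a ≤ x ⊔ i := by
            calc a ≤ x ⊔ z := hz
              _ ≤ x ⊔ (i ⊔ x) := sup_le_sup_left hzi x
              _ = x ⊔ i := by rw [sup_comm i x, ← sup_assoc, sup_idem]
          rw [sup_inf_left]
          have h1 : x ⊔ a = a := sup_eq_right.2 hxa
          rw [h1]
          exact le_antisymm inf_le_right (le_inf hax (le_refl a))
      obtain ⟨P, hP, hFaP, hPI⟩ :=
        lfilter_separation I' Fa hI'bot hI'down hI'join hFaF hdisj
      have hxI : x ∈ I' := ⟨⊥, bot_inf_eq x, le_sup_right⟩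
      have hxP : x ∉ P := fun h => hPI x h hxI
      -- the filter generated by P and x is a proper filter strictly containing P
      set G : Set D := {z | ∃ p ∈ P, p ⊓ x ≤ z} with hG
      obtain ⟨⟨⟨hPne, hPmeet, hPup⟩, hPbot⟩, hPprime⟩ := hP
      have hGproper : IsProperLFilter G := by
        refine ⟨⟨?_, ?_, ?_⟩, ?_⟩
        · obtain ⟨p, hp⟩ := hPne
          exact ⟨x, p, hp, inf_le_right⟩
        · rintro z₁ ⟨p₁, hp₁, h₁⟩ z₂ ⟨p₂, hp₂, h₂⟩
          refine ⟨p₁ ⊓ p₂, hPmeet p₁ hp₁ p₂ hp₂, ?_⟩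
          calc p₁ ⊓ p₂ ⊓ x ≤ (p₁ ⊓ x) ⊓ (p₂ ⊓ x) := by
                simp only [le_inf_iff]
                exact ⟨⟨inf_le_left.trans inf_le_left, inf_le_right⟩,
                  ⟨inf_le_left.trans inf_le_right, inf_le_right⟩⟩
            _ ≤ z₁ ⊓ z₂ := inf_le_inf h₁ h₂
        · rintro z₁ ⟨p, hp, h⟩ z₂ hz
          exact ⟨p, hp, h.trans hz⟩
        · rintro ⟨p, hp, h⟩
          have hpx : p ⊓ x = ⊥ := le_bot_iff.1 h
          exact hPI p hp ⟨p, hpx, le_sup_left⟩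
      have hPG : P ⊆ G := fun p hp => ⟨p, hp, inf_le_left⟩
      have := (hU P ⟨⟨⟨hPne, hPmeet, hPup⟩, hPbot⟩, hPprime⟩).2 G hGproper hPG
      obtain ⟨p, hp⟩ := hPne
      exact hxP (this ▸ (⟨p, hp, inf_le_right⟩ : x ∈ G))
    obtain ⟨z, hz1, hz2⟩ := sec
    refine ⟨z ⊔ b, le_sup_right, ?_, ?_, ?_⟩
    · rw [← hz2]; exact sup_le (le_sup_right) (hbx.trans le_sup_left)
    · rw [inf_sup_left, hz1, bot_sup_eq, inf_eq_right.2 hbx]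
    · rw [← sup_assoc, hz2, sup_eq_left.2 hba]
end

section
/- In an inverse semigroup, every filter is a coset: if A is a nonempty, downward-directed, upward-closed subset and a, b, c ∈ A, then a b⁻¹ c ∈ A. -/
/-- An inverse semigroup: a semigroup with an involution-like inverse operation such that
`a * a⁻¹ * a = a`, `a⁻¹ * a * a⁻¹ = a⁻¹` and idempotents commute (which forces inverses
to be unique). -/
class InverseSemigroup (S : Type*) extends Semigroup S where
  sinv : S → S
  mul_sinv_mul : ∀ a : S, a * sinv a * a = a
  sinv_mul_sinv : ∀ a : S, sinv a * a * sinv a = sinv a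
  idem_comm : ∀ e f : S, e * e = e → f * f = f → e * f = f * e

namespace InverseSemigroup

variable {S : Type*} [InverseSemigroup S]

/-- The natural partial order: `a ≤ b` iff `a = e * b` for some idempotent `e`. -/
def nle (a b : S) : Prop := ∃ e : S, e * e = e ∧ a = e * b

/-- A filter: nonempty, downward directed and upward closed with respect to the
natural partial order. -/
def IsFilter (A : Set S) : Prop :=
  A.Nonempty ∧ (∀ x ∈ A, ∀ y ∈ A, ∃ z ∈ A, nle z x ∧ nle z y) ∧
    (∀ x ∈ A, ∀ y : S, nle x y → y ∈ A)

end InverseSemigroup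

open InverseSemigroup

section MyAux

variable {S : Type*} [InverseSemigroup S]

private lemma my_idem_mul_sinv (a : S) : (a * sinv a) * (a * sinv a) = a * sinv a := by
  calc (a * sinv a) * (a * sinv a) = (a * sinv a * a) * sinv a := by
        simp only [mul_assoc]
    _ = a * sinv a := by rw [mul_sinv_mul]

private lemma my_idem_sinv_mul (a : S) : (sinv a * a) * (sinv a * a) = sinv a * a := by
  calc (sinv a * a) * (sinv a * a) = (sinv a * a * sinv a) * a := by
        simp only [mul_assoc]
    _ = sinv a * a := by rw [sinv_mul_sinv]

private lemma my_nle_trans {x y z : S} (h1 : nle x y) (h2 : nle y z) : nle x z := by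
  obtain ⟨e, he, hx⟩ := h1
  obtain ⟨f, hf, hy⟩ := h2
  refine ⟨e * f, ?_, ?_⟩
  · calc (e * f) * (e * f) = e * (f * e) * f := by simp only [mul_assoc]
      _ = e * (e * f) * f := by rw [idem_comm f e hf he]
      _ = (e * e) * (f * f) := by simp only [mul_assoc]
      _ = e * f := by rw [he, hf]
  · rw [hx, hy, mul_assoc]

/-- Convert `a * g` (g idempotent) to left form `e * a`. -/
private lemma my_right_to_left {a g : S} (hg : g * g = g) :
    ∃ e : S, e * e = e ∧ a * g = e * a := by
  refine ⟨a * g * sinv a, ?_, ?_⟩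
  · calc (a * g * sinv a) * (a * g * sinv a)
        = a * (g * (sinv a * a)) * (g * sinv a) := by simp only [mul_assoc]
      _ = a * ((sinv a * a) * g) * (g * sinv a) := by
          rw [idem_comm g (sinv a * a) hg (my_idem_sinv_mul a)]
      _ = (a * sinv a * a) * ((g * g) * sinv a) := by simp only [mul_assoc]
      _ = a * g * sinv a := by rw [mul_sinv_mul, hg, mul_assoc]
  · symm
    calc (a * g * sinv a) * a = a * (g * (sinv a * a)) := by simp only [mul_assoc]
      _ = a * ((sinv a * a) * g) := by
          rw [idem_comm g (sinv a * a) hg (my_idem_sinv_mul a)]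
      _ = (a * sinv a * a) * g := by simp only [mul_assoc]
      _ = a * g := by rw [mul_sinv_mul]

/-- Convert `e * a` (e idempotent) to right form `a * g`. -/
private lemma my_left_to_right {a e : S} (he : e * e = e) :
    ∃ g : S, g * g = g ∧ e * a = a * g := by
  refine ⟨sinv a * e * a, ?_, ?_⟩
  · calc (sinv a * e * a) * (sinv a * e * a)
        = sinv a * (e * (a * sinv a)) * (e * a) := by simp only [mul_assoc]
      _ = sinv a * ((a * sinv a) * e) * (e * a) := by
          rw [idem_comm e (a * sinv a) he (my_idem_mul_sinv a)]
      _ = (sinv a * a * sinv a) * ((e * e) * a) := by simp only [mul_assoc]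
      _ = sinv a * e * a := by rw [sinv_mul_sinv, he, mul_assoc]
  · symm
    calc a * (sinv a * e * a) = (a * sinv a) * e * a := by simp only [mul_assoc]
      _ = e * (a * sinv a) * a := by rw [idem_comm (a * sinv a) e (my_idem_mul_sinv a) he]
      _ = e * (a * sinv a * a) := by simp only [mul_assoc]
      _ = e * a := by rw [mul_sinv_mul]

/-- `nle` is compatible with multiplication. -/
private lemma my_nle_mul {x y a b : S} (h1 : nle x a) (h2 : nle y b) :
    nle (x * y) (a * b) := by
  obtain ⟨e, he, hx⟩ := h1
  obtain ⟨f, hf, hy⟩ := h2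
  obtain ⟨g, hg, hxg⟩ := my_left_to_right (a := a) he
  -- x = a * g, y = f * b, so x * y = a * (g * f) * b with g * f idempotent
  have hgf : (g * f) * (g * f) = g * f := by
    calc (g * f) * (g * f) = g * (f * g) * f := by simp only [mul_assoc]
      _ = g * (g * f) * f := by rw [idem_comm f g hf hg]
      _ = (g * g) * (f * f) := by simp only [mul_assoc]
      _ = g * f := by rw [hg, hf]
  obtain ⟨k, hk, hak⟩ := my_right_to_left (a := a) hgf
  refine ⟨k, hk, ?_⟩
  calc x * y = (a * g) * (f * b) := by rw [hx, hxg, hy]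
    _ = (a * (g * f)) * b := by simp only [mul_assoc]
    _ = (a * (g * f)) * b := by simp only [mul_assoc]
    _ = (k * a) * b := by rw [hak]
    _ = k * (a * b) := by rw [mul_assoc]

/-- Uniqueness of inverses. -/
private lemma my_sinv_eq {x u : S} (h1 : x * u * x = x) (h2 : u * x * u = u) :
    u = sinv x := by
  have hv1 := mul_sinv_mul x
  have hv2 := sinv_mul_sinv x
  set v := sinv x with hv
  have hxu : (x * u) * (x * u) = x * u := by
    calc (x * u) * (x * u) = (x * u * x) * u := by simp only [mul_assoc]
      _ = x * u := by rw [h1]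
  have hxv : (x * v) * (x * v) = x * v := by
    calc (x * v) * (x * v) = (x * v * x) * v := by simp only [mul_assoc]
      _ = x * v := by rw [hv1]
  have hux : (u * x) * (u * x) = u * x := by
    calc (u * x) * (u * x) = u * (x * u * x) := by
          simp only [mul_assoc]
      _ = u * x := by rw [h1]
  have hvx : (v * x) * (v * x) = v * x := by
    calc (v * x) * (v * x) = v * (x * v * x) := by simp only [mul_assoc]
      _ = v * x := by rw [hv1]
  have e1 : u = u * x * v := by
    calc u = u * x * u := h2.symm
      _ = u * (x * v * x) * u := by rw [hv1]
      _ = u * ((x * v) * (x * u)) := by simp only [mul_assoc]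
      _ = u * ((x * u) * (x * v)) := by rw [idem_comm (x * v) (x * u) hxv hxu]
      _ = (u * x * u) * (x * v) := by simp only [mul_assoc]
      _ = u * (x * v) := by rw [h2]
      _ = u * x * v := by rw [mul_assoc]
  have e2 : v = u * x * v := by
    calc v = v * x * v := hv2.symm
      _ = v * (x * u * x) * v := by rw [h1]
      _ = ((v * x) * (u * x)) * v := by simp only [mul_assoc]
      _ = ((u * x) * (v * x)) * v := by rw [idem_comm (v * x) (u * x) hvx hux]
      _ = (u * x) * (v * x * v) := by simp only [mul_assoc]
      _ = (u * x) * v := by rw [hv2]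
  rw [e1, ← e2]

/-- `nle` is compatible with inversion. -/
private lemma my_nle_sinv {x a : S} (h : nle x a) : nle (sinv x) (sinv a) := by
  obtain ⟨e, he, hx⟩ := h
  -- sinv (e * a) = sinv a * e
  have h1 : x * (sinv a * e) * x = x := by
    rw [hx]
    calc (e * a) * (sinv a * e) * (e * a)
        = e * (a * sinv a) * ((e * e) * a) := by simp only [mul_assoc]
      _ = e * (a * sinv a) * (e * a) := by rw [he]
      _ = (e * ((a * sinv a) * e)) * a := by simp only [mul_assoc]
      _ = (e * (e * (a * sinv a))) * a := by
          rw [idem_comm (a * sinv a) e (my_idem_mul_sinv a) he]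
      _ = ((e * e) * (a * sinv a)) * a := by simp only [mul_assoc]
      _ = e * (a * sinv a * a) := by rw [he, mul_assoc]
      _ = e * a := by rw [mul_sinv_mul]
  have h2 : (sinv a * e) * x * (sinv a * e) = sinv a * e := by
    rw [hx]
    calc (sinv a * e) * (e * a) * (sinv a * e)
        = sinv a * ((e * e) * ((a * sinv a) * e)) := by simp only [mul_assoc]
      _ = sinv a * (e * ((a * sinv a) * e)) := by rw [he]
      _ = sinv a * (e * (e * (a * sinv a))) := by
          rw [idem_comm (a * sinv a) e (my_idem_mul_sinv a) he]
      _ = sinv a * ((e * e) * (a * sinv a)) := by simp only [mul_assoc]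
      _ = sinv a * (e * (a * sinv a)) := by rw [he]
      _ = sinv a * ((a * sinv a) * e) := by
          rw [idem_comm e (a * sinv a) he (my_idem_mul_sinv a)]
      _ = (sinv a * a * sinv a) * e := by simp only [mul_assoc]
      _ = sinv a * e := by rw [sinv_mul_sinv]
  have hsx : sinv x = sinv a * e := (my_sinv_eq h1 h2).symm
  refine ⟨sinv a * e * a, ?_, ?_⟩
  · calc (sinv a * e * a) * (sinv a * e * a)
        = sinv a * (e * (a * sinv a)) * (e * a) := by simp only [mul_assoc]
      _ = sinv a * ((a * sinv a) * e) * (e * a) := by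
          rw [idem_comm e (a * sinv a) he (my_idem_mul_sinv a)]
      _ = (sinv a * a * sinv a) * ((e * e) * a) := by simp only [mul_assoc]
      _ = sinv a * e * a := by rw [sinv_mul_sinv, he, mul_assoc]
  · rw [hsx]
    symm
    calc (sinv a * e * a) * sinv a
        = sinv a * (e * (a * sinv a)) := by simp only [mul_assoc]
      _ = sinv a * ((a * sinv a) * e) := by
          rw [idem_comm e (a * sinv a) he (my_idem_mul_sinv a)]
      _ = (sinv a * a * sinv a) * e := by simp only [mul_assoc]
      _ = sinv a * e := by rw [sinv_mul_sinv]

end MyAux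

/-- Every filter in an inverse semigroup is a coset: if `a, b, c ∈ A` then `a b⁻¹ c ∈ A`. -/
theorem stmt12 {S : Type*} [InverseSemigroup S] (A : Set S) (hA : IsFilter A)
    {a b c : S} (ha : a ∈ A) (hb : b ∈ A) (hc : c ∈ A) :
    a * sinv b * c ∈ A := by
  obtain ⟨-, hdir, hup⟩ := hA
  obtain ⟨z, hz, hza, hzb⟩ := hdir a ha b hb
  obtain ⟨w, hw, hwz, hwc⟩ := hdir z hz c hc
  have hwa : nle w a := my_nle_trans hwz hza
  have hwb : nle w b := my_nle_trans hwz hzb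
  have key : nle (w * sinv w * w) (a * sinv b * c) :=
    my_nle_mul (my_nle_mul hwa (my_nle_sinv hwb)) hwc
  rw [mul_sinv_mul] at key
  exact hup w hw _ key
end

section
/- Let S be an inverse semigroup. There is an order-isomorphism between the idempotent filters of S (filters containing an idempotent) and the filters of the semilattice of idempotents E(S), given by A ↦ A ∩ E(S) with inverse F ↦ F↑ (upward closure in S); proper filters correspond to proper filters. -/
namespace InverseSemigroup

variable {S : Type*} [InverseSemigroup S]

/-- The set of idempotents. -/
def idemSet (S : Type*) [InverseSemigroup S] : Set S := {e | e * e = e}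

/-- A filter of the sub-poset `C` of `S` (with respect to the natural partial order):
a nonempty, downward directed, upward closed (within `C`) subset of `C`. -/
def IsFilterIn (C : Set S) (A : Set S) : Prop :=
  A ⊆ C ∧ A.Nonempty ∧ (∀ x ∈ A, ∀ y ∈ A, ∃ z ∈ A, nle z x ∧ nle z y) ∧
    (∀ x ∈ A, ∀ y ∈ C, nle x y → y ∈ A)

/-- Upward closure in `S`. -/
def upcl (A : Set S) : Set S := {y | ∃ x ∈ A, nle x y}

lemma idem_mul' {e f : S} (he : e * e = e) (hf : f * f = f) :
    (e * f) * (e * f) = e * f := by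
  calc e * f * (e * f) = e * (f * e * f) := by rw [mul_assoc, mul_assoc]
    _ = e * (e * f * f) := by rw [idem_comm f e hf he]
    _ = e * e * (f * f) := by rw [mul_assoc, mul_assoc]
    _ = e * f := by rw [he, hf]

lemma nle_refl (a : S) : nle a a := by
  refine ⟨a * sinv a, ?_, (mul_sinv_mul a).symm⟩
  calc a * sinv a * (a * sinv a) = a * sinv a * a * sinv a := by rw [← mul_assoc]
    _ = a * sinv a := by rw [mul_sinv_mul]

lemma nle_trans {a b c : S} (h1 : nle a b) (h2 : nle b c) : nle a c := by
  obtain ⟨e, he, hab⟩ := h1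
  obtain ⟨f, hf, hbc⟩ := h2
  exact ⟨e * f, idem_mul' he hf, by rw [hab, hbc, mul_assoc]⟩

lemma idem_of_nle_idem {a e : S} (he : e * e = e) (h : nle a e) : a * a = a := by
  obtain ⟨f, hf, rfl⟩ := h
  calc f * e * (f * e) = f * (e * f * e) := by rw [mul_assoc, mul_assoc]
    _ = f * (f * e * e) := by rw [idem_comm e f he hf]
    _ = f * f * (e * e) := by rw [mul_assoc, mul_assoc]
    _ = f * e := by rw [he, hf]

end InverseSemigroup

open InverseSemigroup

/-- The maps `A ↦ A ∩ E(S)` and `F ↦ F↑` form a mutually inverse, inclusion-preserving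
correspondence between idempotent filters of `S` and filters of the semilattice of
idempotents `E(S)`, under which proper filters (not containing a zero element)
correspond to proper filters. -/
theorem stmt13 {S : Type*} [InverseSemigroup S] :
    (∀ A : Set S, IsFilterIn Set.univ A → (∃ e ∈ A, e * e = e) →
      IsFilterIn (idemSet S) (A ∩ idemSet S)) ∧
    (∀ F : Set S, IsFilterIn (idemSet S) F →
      IsFilterIn Set.univ (upcl F) ∧ ∃ e ∈ upcl F, e * e = e) ∧
    (∀ A : Set S, IsFilterIn Set.univ A → (∃ e ∈ A, e * e = e) →
      upcl (A ∩ idemSet S) = A) ∧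
    (∀ F : Set S, IsFilterIn (idemSet S) F → upcl F ∩ idemSet S = F) ∧
    (∀ A B : Set S, IsFilterIn Set.univ A → IsFilterIn Set.univ B →
      (∃ e ∈ A, e * e = e) → (∃ e ∈ B, e * e = e) →
      (A ⊆ B ↔ A ∩ idemSet S ⊆ B ∩ idemSet S)) ∧
    (∀ A : Set S, IsFilterIn Set.univ A → (∃ e ∈ A, e * e = e) →
      ∀ z : S, (∀ s : S, z * s = z ∧ s * z = z) →
        (z ∉ A ↔ z ∉ A ∩ idemSet S)) := by
  -- part 1
  have part1 : ∀ A : Set S, IsFilterIn Set.univ A → (∃ e ∈ A, e * e = e) →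
      IsFilterIn (idemSet S) (A ∩ idemSet S) := by
    intro A ⟨_, _, hdir, hup⟩ ⟨e, heA, he⟩
    refine ⟨Set.inter_subset_right, ⟨e, heA, he⟩, ?_, ?_⟩
    · rintro x ⟨hxA, hx⟩ y ⟨hyA, _⟩
      obtain ⟨z, hzA, hzx, hzy⟩ := hdir x hxA y hyA
      exact ⟨z, ⟨hzA, idem_of_nle_idem hx hzx⟩, hzx, hzy⟩
    · rintro x ⟨hxA, _⟩ y hy hxy
      exact ⟨hup x hxA y (Set.mem_univ y) hxy, hy⟩
  -- part 3
  have part3 : ∀ A : Set S, IsFilterIn Set.univ A → (∃ e ∈ A, e * e = e) →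
      upcl (A ∩ idemSet S) = A := by
    intro A hA ⟨e, heA, he⟩
    obtain ⟨_, _, hdir, hup⟩ := hA
    ext a
    constructor
    · rintro ⟨x, ⟨hxA, _⟩, hxa⟩
      exact hup x hxA a (Set.mem_univ a) hxa
    · intro haA
      obtain ⟨z, hzA, hza, hze⟩ := hdir a haA e heA
      exact ⟨z, ⟨hzA, idem_of_nle_idem he hze⟩, hza⟩
  refine ⟨part1, ?_, part3, ?_, ?_, ?_⟩
  · -- part 2
    intro F ⟨hFE, ⟨e, heF⟩, hdir, hup⟩
    refine ⟨⟨Set.subset_univ _, ⟨e, e, heF, nle_refl e⟩, ?_, ?_⟩,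
      e, ⟨e, heF, nle_refl e⟩, hFE heF⟩
    · rintro x ⟨a, haF, hax⟩ y ⟨b, hbF, hby⟩
      obtain ⟨c, hcF, hca, hcb⟩ := hdir a haF b hbF
      exact ⟨c, ⟨c, hcF, nle_refl c⟩, nle_trans hca hax, nle_trans hcb hby⟩
    · rintro x ⟨a, haF, hax⟩ y _ hxy
      exact ⟨a, haF, nle_trans hax hxy⟩
  · -- part 4
    intro F ⟨hFE, _, _, hup⟩
    ext a
    constructor
    · rintro ⟨⟨x, hxF, hxa⟩, ha⟩
      exact hup x hxF a ha hxa
    · intro haF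
      exact ⟨⟨a, haF, nle_refl a⟩, hFE haF⟩
  · -- part 5
    intro A B hA hB hAe hBe
    constructor
    · intro h x hx
      exact ⟨h hx.1, hx.2⟩
    · intro h
      have : upcl (A ∩ idemSet S) ⊆ upcl (B ∩ idemSet S) := by
        rintro y ⟨x, hx, hxy⟩
        exact ⟨x, h hx, hxy⟩
      rw [part3 A hA hAe, part3 B hB hBe] at this
      exact this
  · -- part 6
    intro A _ _ z hz
    constructor
    · intro h hz'
      exact h hz'.1
    · intro h hzA
      exact h ⟨hzA, (hz z).1⟩
end

section
/- Let S be a Boolean inverse monoid and let e, e₁ be idempotents with a = b ⊕ eᶜ where d(b) = r(b) = e, and a = b₁ ⊕ e₁ᶜ where d(b₁) = r(b₁) = e₁ (orthogonal joins, with complements taken in the Boolean algebra of idempotents). Then b and b₁ are compatible, and setting x = b ⊓ b₁ we have d(x) = r(x) = e·e₁, b = x ⊔ e·(e·e₁)ᶜ, and b₁ = x ⊔ e₁·(e·e₁)ᶜ. -/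
namespace InverseSemigroup

variable {S : Type*} [InverseSemigroup S]

/-- Two elements are compatible if `a⁻¹b` and `ab⁻¹` are idempotents. -/
def compat (a b : S) : Prop :=
  (sinv a * b) * (sinv a * b) = sinv a * b ∧ (a * sinv b) * (a * sinv b) = a * sinv b

end InverseSemigroup

open InverseSemigroup

/-- A distributive inverse semigroup: an inverse semigroup with zero having joins of
compatible pairs, over which multiplication distributes. -/
class DistributiveInverseSemigroup (S : Type*) extends InverseSemigroup S where
  zero : S
  zero_mul : ∀ a : S, zero * a = zero
  mul_zero : ∀ a : S, a * zero = zero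
  join : S → S → S
  le_join_left : ∀ a b : S, compat a b → nle a (join a b)
  le_join_right : ∀ a b : S, compat a b → nle b (join a b)
  join_le : ∀ a b c : S, compat a b → nle a c → nle b c → nle (join a b) c
  mul_join : ∀ a b c : S, compat a b → c * join a b = join (c * a) (c * b)
  join_mul : ∀ a b c : S, compat a b → join a b * c = join (a * c) (b * c)

namespace DistributiveInverseSemigroup

variable {S : Type*} [DistributiveInverseSemigroup S]

/-- A filter: nonempty, downward directed and upward closed. -/
def IsFilter (A : Set S) : Prop :=
  A.Nonempty ∧ (∀ x ∈ A, ∀ y ∈ A, ∃ z ∈ A, nle z x ∧ nle z y) ∧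
    (∀ x ∈ A, ∀ y : S, nle x y → y ∈ A)

/-- Proper filter: does not contain the zero. -/
def IsProperFilter (A : Set S) : Prop := IsFilter A ∧ zero ∉ A

/-- Prime filter: proper, and a compatible join lies in it only if one of the
joinands does. -/
def IsPrimeFilter (A : Set S) : Prop :=
  IsProperFilter A ∧ ∀ a b : S, compat a b → join a b ∈ A → a ∈ A ∨ b ∈ A

/-- Ultrafilter: maximal proper filter. -/
def IsUltraFilter (A : Set S) : Prop :=
  IsProperFilter A ∧ ∀ B : Set S, IsProperFilter B → A ⊆ B → A = B

/-- `d(A) = (A⁻¹A)↑`. -/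
def dOf (A : Set S) : Set S := {t | ∃ x ∈ A, ∃ u ∈ A, nle (sinv x * u) t}

end DistributiveInverseSemigroup

open DistributiveInverseSemigroup

/-- A Boolean inverse monoid: a distributive inverse monoid whose idempotents form a
Boolean algebra, witnessed by a complement operation on idempotents. -/
class BooleanInverseMonoid (S : Type*) extends DistributiveInverseSemigroup S where
  one : S
  one_mul : ∀ a : S, one * a = a
  mul_one : ∀ a : S, a * one = a
  icompl : S → S
  icompl_idem : ∀ e : S, e * e = e → icompl e * icompl e = icompl e
  icompl_inf : ∀ e : S, e * e = e → e * icompl e = zero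
  icompl_sup : ∀ e : S, e * e = e → join e (icompl e) = one

open BooleanInverseMonoid

namespace Stmt19Aux
open InverseSemigroup

section IS
variable {S : Type*} [InverseSemigroup S]

lemma idem_mul {e f : S} (he : e*e = e) (hf : f*f = f) : (e*f)*(e*f) = e*f := by
  have h := idem_comm f e hf he
  calc e*f*(e*f) = e*(f*e)*f := by simp only [mul_assoc]
    _ = e*(e*f)*f := by rw [h]
    _ = (e*e)*(f*f) := by simp only [mul_assoc]
    _ = e*f := by rw [he, hf]

lemma d_idem (a : S) : (sinv a * a) * (sinv a * a) = sinv a * a := by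
  calc sinv a * a * (sinv a * a) = (sinv a * a * sinv a) * a := by simp only [mul_assoc]
    _ = sinv a * a := by rw [sinv_mul_sinv]

lemma r_idem (a : S) : (a * sinv a) * (a * sinv a) = a * sinv a := by
  calc a * sinv a * (a * sinv a) = (a * sinv a * a) * sinv a := by simp only [mul_assoc]
    _ = a * sinv a := by rw [mul_sinv_mul]

/-- uniqueness of inverses -/
lemma inv_unique {c x y : S} (h1 : c*x*c = c) (h2 : x*c*x = x)
    (h3 : c*y*c = c) (h4 : y*c*y = y) : x = y := by
  have hcx : (c*x)*(c*x) = c*x := by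
    calc c*x*(c*x) = (c*x*c)*x := by simp only [mul_assoc]
      _ = c*x := by rw [h1]
  have hcy : (c*y)*(c*y) = c*y := by
    calc c*y*(c*y) = (c*y*c)*y := by simp only [mul_assoc]
      _ = c*y := by rw [h3]
  have hxc : (x*c)*(x*c) = x*c := by
    calc x*c*(x*c) = (x*c*x)*c := by simp only [mul_assoc]
      _ = x*c := by rw [h2]
  have hyc : (y*c)*(y*c) = y*c := by
    calc y*c*(y*c) = (y*c*y)*c := by simp only [mul_assoc]
      _ = y*c := by rw [h4]
  -- x = x*c*y
  have e1 : x = x*c*y := by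
    conv_lhs => rw [← h2, ← h3]
    calc x*(c*y*c)*x = x*((c*y)*(c*x)) := by simp only [mul_assoc]
      _ = x*((c*x)*(c*y)) := by rw [idem_comm _ _ hcy hcx]
      _ = (x*c*x)*(c*y) := by simp only [mul_assoc]
      _ = x*c*y := by rw [h2]; simp only [mul_assoc]
  have e2 : y = x*c*y := by
    conv_lhs => rw [← h4, ← h1]
    calc y*(c*x*c)*y = ((y*c)*(x*c))*y := by simp only [mul_assoc]
      _ = ((x*c)*(y*c))*y := by rw [idem_comm _ _ hyc hxc]
      _ = x*c*(y*c*y) := by simp only [mul_assoc]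
      _ = x*c*y := by rw [h4]
  rw [e1, ← e2]

lemma sinv_idem {e : S} (he : e*e = e) : sinv e = e :=
  inv_unique (mul_sinv_mul e) (sinv_mul_sinv e) (by rw [he, he]) (by rw [he, he])

lemma sinv_sinv (a : S) : sinv (sinv a) = a := by
  have h1 := mul_sinv_mul (sinv a)
  have h2 := sinv_mul_sinv (sinv a)
  exact inv_unique h1 h2 (sinv_mul_sinv a) (mul_sinv_mul a)

lemma sinv_mul (a b : S) : sinv (a*b) = sinv b * sinv a := by
  have hc := idem_comm _ _ (r_idem b) (d_idem a)
  refine inv_unique (mul_sinv_mul (a*b)) (sinv_mul_sinv (a*b)) ?_ ?_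
  · calc a*b*(sinv b * sinv a)*(a*b) = a*((b*sinv b) * (sinv a*a))*b := by
          simp only [mul_assoc]
      _ = a*((sinv a*a) * (b*sinv b))*b := by rw [hc]
      _ = (a*sinv a*a)*(b*sinv b*b) := by simp only [mul_assoc]
      _ = a*b := by rw [mul_sinv_mul, mul_sinv_mul]
  · calc sinv b*sinv a*(a*b)*(sinv b*sinv a)
        = sinv b*((sinv a*a) * (b*sinv b))*sinv a := by simp only [mul_assoc]
      _ = sinv b*((b*sinv b) * (sinv a*a))*sinv a := by rw [← hc]
      _ = (sinv b*b*sinv b)*(sinv a*a*sinv a) := by simp only [mul_assoc]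
      _ = sinv b*sinv a := by rw [sinv_mul_sinv, sinv_mul_sinv]

end IS
end Stmt19Aux
namespace Stmt19Aux
section IS
variable {S : Type*} [InverseSemigroup S]

lemma nle_refl (a : S) : nle a a := ⟨a * sinv a, r_idem a, (mul_sinv_mul a).symm⟩

lemma sinv_of_nle {s t f : S} (hf : f*f = f) (hs : s = f*t) : sinv s = sinv t * f := by
  rw [hs, sinv_mul, sinv_idem hf]

lemma nle_restrict {s t : S} (h : nle s t) : s = s * sinv s * t := by
  obtain ⟨f, hf, hs⟩ := h
  have hsi := sinv_of_nle hf hs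
  calc s = f*t := hs
    _ = (f*f)*((t*sinv t)*t) := by rw [hf, mul_sinv_mul]
    _ = f*(f*(t*sinv t))*t := by simp only [mul_assoc]
    _ = f*((t*sinv t)*f)*t := by rw [idem_comm _ _ hf (r_idem t)]
    _ = (f*t)*(sinv t*f)*t := by simp only [mul_assoc]
    _ = s * sinv s * t := by rw [← hs, ← hsi]

lemma nle_range {s t : S} (h : nle s t) : s * sinv s = (s * sinv s) * (t * sinv t) := by
  obtain ⟨f, hf, hs⟩ := h
  have hsi := sinv_of_nle hf hs
  have key : s * sinv s = f * (t * sinv t) := by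
    calc s * sinv s = f*(t*(sinv t*f)) := by rw [hsi, hs]; simp only [mul_assoc]
      _ = f*((t*sinv t)*f) := by simp only [mul_assoc]
      _ = f*(f*(t*sinv t)) := by rw [idem_comm _ _ hf (r_idem t)]
      _ = (f*f)*(t*sinv t) := by simp only [mul_assoc]
      _ = f * (t * sinv t) := by rw [hf]
  rw [key]
  calc f*(t*sinv t) = f*((t*sinv t)*(t*sinv t)) := by rw [r_idem]
    _ = f*(t*sinv t)*(t*sinv t) := by simp only [mul_assoc]

lemma nle_antisymm {s t : S} (h1 : nle s t) (h2 : nle t s) : s = t := by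
  have a1 := nle_restrict h1
  have r1 := nle_range h1
  have r2 := nle_range h2
  have hr : t * sinv t = s * sinv s := by
    calc t * sinv t = (t*sinv t)*(s*sinv s) := r2
      _ = (s*sinv s)*(t*sinv t) := idem_comm _ _ (r_idem t) (r_idem s)
      _ = s*sinv s := r1.symm
  calc s = s * sinv s * t := a1
    _ = t * sinv t * t := by rw [hr]
    _ = t := mul_sinv_mul t

lemma conj_idem {c h : S} (hh : h*h = h) :
    (sinv c * h * c)*(sinv c * h * c) = sinv c * h * c := by
  have hc := idem_comm _ _ (r_idem c) hh
  calc (sinv c * h * c)*(sinv c * h * c)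
      = sinv c * (h*((c*sinv c)*h)) * c := by simp only [mul_assoc]
    _ = sinv c * (h*(h*(c*sinv c))) * c := by rw [← hc]
    _ = sinv c * ((h*h)*(c*sinv c)) * c := by simp only [mul_assoc]
    _ = (sinv c * h) * ((c*sinv c)*c) := by rw [hh]; simp only [mul_assoc]
    _ = sinv c * h * c := by rw [mul_sinv_mul]

lemma compat_of_nle_nle {s t c : S} (hs : nle s c) (ht : nle t c) : compat s t := by
  have hs' := nle_restrict hs
  have ht' := nle_restrict ht
  have hssi : sinv s = sinv c * (s * sinv s) := sinv_of_nle (r_idem s) hs'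
  have htti : sinv t = sinv c * (t * sinv t) := sinv_of_nle (r_idem t) ht'
  have hmeet := idem_mul (r_idem s) (r_idem t)
  constructor
  · have key : sinv s * t = sinv c * ((s*sinv s)*(t*sinv t)) * c := by
      conv_lhs => rw [hssi, ht']
      simp only [mul_assoc]
    rw [key]; exact conj_idem hmeet
  · have key : s * sinv t = ((s*sinv s)*(c*sinv c))*(t*sinv t) := by
      conv_lhs => rw [hs', htti]
      simp only [mul_assoc]
    rw [key]; exact idem_mul (idem_mul (r_idem s) (r_idem c)) (r_idem t)

end IS

section DIS
open DistributiveInverseSemigroup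
variable {S : Type*} [DistributiveInverseSemigroup S]

lemma sinv_zero : sinv (zero : S) = zero := by
  calc sinv (zero:S) = sinv zero * zero * sinv zero := (sinv_mul_sinv zero).symm
    _ = zero := by rw [DistributiveInverseSemigroup.mul_zero, DistributiveInverseSemigroup.zero_mul]

lemma compat_zero_right (a : S) : compat a zero := by
  constructor
  · rw [DistributiveInverseSemigroup.mul_zero, DistributiveInverseSemigroup.zero_mul]
  · rw [sinv_zero, DistributiveInverseSemigroup.mul_zero, DistributiveInverseSemigroup.zero_mul]

lemma compat_zero_left (a : S) : compat zero a := by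
  constructor
  · rw [sinv_zero, DistributiveInverseSemigroup.zero_mul, DistributiveInverseSemigroup.zero_mul]
  · rw [DistributiveInverseSemigroup.zero_mul, DistributiveInverseSemigroup.zero_mul]

lemma nle_zero (a : S) : nle zero a := ⟨zero, DistributiveInverseSemigroup.zero_mul zero, (DistributiveInverseSemigroup.zero_mul a).symm⟩

lemma join_zero (a : S) : join a zero = a :=
  nle_antisymm (join_le _ _ _ (compat_zero_right a) (nle_refl a) (nle_zero a))
    (le_join_left _ _ (compat_zero_right a))

lemma join_zero_left (a : S) : join zero a = a :=
  nle_antisymm (join_le _ _ _ (compat_zero_left a) (nle_zero a) (nle_refl a))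
    (le_join_right _ _ (compat_zero_left a))

end DIS
end Stmt19Aux
namespace Stmt19Aux
section IS2
variable {S : Type*} [InverseSemigroup S]

lemma compat_idem {e f : S} (he : e*e = e) (hf : f*f = f) : compat e f := by
  constructor
  · rw [sinv_idem he]; exact idem_mul he hf
  · rw [sinv_idem hf]; exact idem_mul he hf

end IS2

section BIM
open DistributiveInverseSemigroup BooleanInverseMonoid
variable {S : Type*} [BooleanInverseMonoid S]

lemma eq_mul_icompl {w q : S} (_hw : w*w = w) (hq : q*q = q) (h0 : w*q = zero) :
    w = w * icompl q := by
  calc w = w * one := (BooleanInverseMonoid.mul_one w).symm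
    _ = w * join q (icompl q) := by rw [icompl_sup q hq]
    _ = join (w*q) (w*icompl q) := mul_join q (icompl q) w (compat_idem hq (icompl_idem q hq))
    _ = join zero (w*icompl q) := by rw [h0]
    _ = w * icompl q := join_zero_left _

lemma icompl_absorb {p q : S} (hp : p*p = p) (hq : q*q = q) :
    p * icompl q = p * icompl (p*q) := by
  have hg := idem_mul hp hq
  have hqc := icompl_idem q hq
  have hgc := icompl_idem _ hg
  have hu' := idem_mul hp hqc
  have hu := idem_mul hp hgc
  have hA : (p * icompl q) * (p*q) = zero := by
    calc (p*icompl q)*(p*q) = p*((icompl q*p)*q) := by simp only [mul_assoc]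
      _ = p*((p*icompl q)*q) := by rw [idem_comm _ _ hqc hp]
      _ = (p*p)*(icompl q*q) := by simp only [mul_assoc]
      _ = p*(q*icompl q) := by rw [hp, idem_comm _ _ hqc hq]
      _ = zero := by rw [icompl_inf q hq, DistributiveInverseSemigroup.mul_zero]
  have hB : p*icompl q = (p*icompl q)*icompl (p*q) := eq_mul_icompl hu' hg hA
  have hD : (p * icompl (p*q)) * q = zero := by
    calc (p*icompl (p*q))*q = p*(icompl (p*q)*q) := by simp only [mul_assoc]
      _ = p*(q*icompl (p*q)) := by rw [idem_comm _ _ hgc hq]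
      _ = (p*q)*icompl (p*q) := by simp only [mul_assoc]
      _ = zero := icompl_inf _ hg
  have hE : p*icompl (p*q) = (p*icompl (p*q))*icompl q := eq_mul_icompl hu hq hD
  have hmul1 : (p*icompl q)*(p*icompl (p*q)) = p*icompl q := by
    calc (p*icompl q)*(p*icompl (p*q))
        = p*((icompl q*p)*icompl (p*q)) := by simp only [mul_assoc]
      _ = p*((p*icompl q)*icompl (p*q)) := by rw [idem_comm _ _ hqc hp]
      _ = (p*p)*(icompl q*icompl (p*q)) := by simp only [mul_assoc]
      _ = (p*icompl q)*icompl (p*q) := by rw [hp]; simp only [mul_assoc]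
      _ = p*icompl q := hB.symm
  have hmul2 : (p*icompl (p*q))*(p*icompl q) = p*icompl (p*q) := by
    calc (p*icompl (p*q))*(p*icompl q)
        = p*((icompl (p*q)*p)*icompl q) := by simp only [mul_assoc]
      _ = p*((p*icompl (p*q))*icompl q) := by rw [idem_comm _ _ hgc hp]
      _ = (p*p)*(icompl (p*q)*icompl q) := by simp only [mul_assoc]
      _ = (p*icompl (p*q))*icompl q := by rw [hp]; simp only [mul_assoc]
      _ = p*icompl (p*q) := hE.symm
  exact nle_antisymm ⟨p*icompl q, hu', hmul1.symm⟩ ⟨p*icompl (p*q), hu, hmul2.symm⟩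

end BIM
end Stmt19Aux
open Stmt19Aux

/-- Let `S` be a Boolean inverse monoid, `e, e₁` idempotents, and suppose
`a = b ⊕ eᶜ` with `d(b) = r(b) = e` and `a = b₁ ⊕ e₁ᶜ` with `d(b₁) = r(b₁) = e₁`.
Then `b ∼ b₁`, and the meet `x = b ⊓ b₁` exists and satisfies `d(x) = r(x) = e e₁`,
`b = x ⊔ e (e e₁)ᶜ` and `b₁ = x ⊔ e₁ (e e₁)ᶜ`. -/
theorem stmt19 {S : Type*} [BooleanInverseMonoid S] {a b b₁ e e₁ : S}
    (he : e * e = e) (he₁ : e₁ * e₁ = e₁)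
    (hdb : sinv b * b = e) (hrb : b * sinv b = e)
    (hdb₁ : sinv b₁ * b₁ = e₁) (hrb₁ : b₁ * sinv b₁ = e₁)
    (ha : a = join b (icompl e)) (ha₁ : a = join b₁ (icompl e₁)) :
    compat b b₁ ∧
    ∃ x : S, (nle x b ∧ nle x b₁ ∧ ∀ z : S, nle z b → nle z b₁ → nle z x) ∧
      sinv x * x = e * e₁ ∧ x * sinv x = e * e₁ ∧
      b = join x (e * icompl (e * e₁)) ∧
      b₁ = join x (e₁ * icompl (e * e₁)) := by
  have hce := icompl_idem e he
  have hce₁ := icompl_idem e₁ he₁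
  have hg : (e*e₁)*(e*e₁) = e*e₁ := idem_mul he he₁
  have heb : e*b = b := by rw [← hrb]; exact mul_sinv_mul b
  have hbe : b*e = b := by rw [← hdb, ← mul_assoc]; exact mul_sinv_mul b
  have he₁b₁ : e₁*b₁ = b₁ := by rw [← hrb₁]; exact mul_sinv_mul b₁
  have hb₁e₁ : b₁*e₁ = b₁ := by rw [← hdb₁, ← mul_assoc]; exact mul_sinv_mul b₁
  -- compatibility with complements
  have hcompat_b_ce : compat b (icompl e) := by
    have hz1 : sinv b * icompl e = zero := by
      have hsb : sinv b = sinv b * e := by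
        rw [← hrb, ← mul_assoc]; exact (sinv_mul_sinv b).symm
      calc sinv b * icompl e = (sinv b * e) * icompl e := by rw [← hsb]
        _ = sinv b * (e * icompl e) := by rw [mul_assoc]
        _ = zero := by rw [icompl_inf e he, DistributiveInverseSemigroup.mul_zero]
    have hz2 : b * sinv (icompl e) = zero := by
      rw [sinv_idem hce]
      calc b * icompl e = (b*e) * icompl e := by rw [hbe]
        _ = b * (e * icompl e) := by rw [mul_assoc]
        _ = zero := by rw [icompl_inf e he, DistributiveInverseSemigroup.mul_zero]
    constructor
    · rw [hz1]; exact DistributiveInverseSemigroup.zero_mul zero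
    · rw [hz2]; exact DistributiveInverseSemigroup.zero_mul zero
  have hcompat_b₁_ce₁ : compat b₁ (icompl e₁) := by
    have hz1 : sinv b₁ * icompl e₁ = zero := by
      have hsb : sinv b₁ = sinv b₁ * e₁ := by
        rw [← hrb₁, ← mul_assoc]; exact (sinv_mul_sinv b₁).symm
      calc sinv b₁ * icompl e₁ = (sinv b₁ * e₁) * icompl e₁ := by rw [← hsb]
        _ = sinv b₁ * (e₁ * icompl e₁) := by rw [mul_assoc]
        _ = zero := by rw [icompl_inf e₁ he₁, DistributiveInverseSemigroup.mul_zero]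
    have hz2 : b₁ * sinv (icompl e₁) = zero := by
      rw [sinv_idem hce₁]
      calc b₁ * icompl e₁ = (b₁*e₁) * icompl e₁ := by rw [hb₁e₁]
        _ = b₁ * (e₁ * icompl e₁) := by rw [mul_assoc]
        _ = zero := by rw [icompl_inf e₁ he₁, DistributiveInverseSemigroup.mul_zero]
    constructor
    · rw [hz1]; exact DistributiveInverseSemigroup.zero_mul zero
    · rw [hz2]; exact DistributiveInverseSemigroup.zero_mul zero
  have hba : nle b a := by rw [ha]; exact le_join_left _ _ hcompat_b_ce
  have hb₁a : nle b₁ a := by rw [ha₁]; exact le_join_left _ _ hcompat_b₁_ce₁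
  have hcbb₁ : compat b b₁ := compat_of_nle_nle hba hb₁a
  -- b = e*a = a*e, b₁ = e₁*a = a*e₁
  have hbea : b = e * a := by
    rw [ha, mul_join b (icompl e) e hcompat_b_ce, heb, icompl_inf e he, join_zero]
  have hb₁ea : b₁ = e₁ * a := by
    rw [ha₁, mul_join b₁ (icompl e₁) e₁ hcompat_b₁_ce₁, he₁b₁, icompl_inf e₁ he₁, join_zero]
  have hbae : b = a * e := by
    rw [ha, join_mul b (icompl e) e hcompat_b_ce, hbe, idem_comm _ _ hce he,
      icompl_inf e he, join_zero]
  have hb₁ae₁ : b₁ = a * e₁ := by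
    rw [ha₁, join_mul b₁ (icompl e₁) e₁ hcompat_b₁_ce₁, hb₁e₁, idem_comm _ _ hce₁ he₁,
      icompl_inf e₁ he₁, join_zero]
  have hxbe₁ : e * b₁ = b * e₁ := by
    calc e*b₁ = e*(a*e₁) := by rw [← hb₁ae₁]
      _ = (e*a)*e₁ := (mul_assoc _ _ _).symm
      _ = b*e₁ := by rw [← hbea]
  refine ⟨hcbb₁, e*b₁, ⟨?_, ⟨e, he, rfl⟩, ?_⟩, ?_, ?_, ?_, ?_⟩
  · -- nle (e*b₁) b
    refine ⟨e*e₁, hg, ?_⟩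
    calc e*b₁ = (e*e)*(e₁*a) := by rw [he, ← hb₁ea]
      _ = e*(e*e₁)*a := by simp only [mul_assoc]
      _ = e*(e₁*e)*a := by rw [idem_comm _ _ he he₁]
      _ = (e*e₁)*(e*a) := by simp only [mul_assoc]
      _ = (e*e₁)*b := by rw [← hbea]
  · -- meet property
    intro z hzb hzb₁
    have hz1 := nle_restrict hzb₁
    have hr' : z*sinv z = (z*sinv z)*e := by
      have h := nle_range hzb; rwa [hrb] at h
    refine ⟨z*sinv z, r_idem z, ?_⟩
    calc z = (z*sinv z)*b₁ := hz1
      _ = ((z*sinv z)*e)*b₁ := by rw [← hr']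
      _ = (z*sinv z)*(e*b₁) := by rw [mul_assoc]
  · -- d(x) = e*e₁
    rw [hxbe₁, sinv_mul, sinv_idem he₁]
    calc e₁*sinv b*(b*e₁) = e₁*(sinv b*b)*e₁ := by simp only [mul_assoc]
      _ = e₁*e*e₁ := by rw [hdb]
      _ = (e₁*e)*e₁ := rfl
      _ = (e*e₁)*e₁ := by rw [idem_comm _ _ he₁ he]
      _ = e*(e₁*e₁) := by rw [mul_assoc]
      _ = e*e₁ := by rw [he₁]
  · -- r(x) = e*e₁
    rw [sinv_mul, sinv_idem he]
    calc e*b₁*(sinv b₁*e) = e*(b₁*sinv b₁)*e := by simp only [mul_assoc]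
      _ = e*e₁*e := by rw [hrb₁]
      _ = e*(e₁*e) := by rw [mul_assoc]
      _ = e*(e*e₁) := by rw [idem_comm _ _ he₁ he]
      _ = (e*e)*e₁ := by rw [mul_assoc]
      _ = e*e₁ := by rw [he]
  · -- b = join x (e * icompl (e*e₁))
    have h1 : b = join (e*b₁) (e*icompl e₁) := by
      rw [hbea, ha₁, mul_join b₁ (icompl e₁) e hcompat_b₁_ce₁]
    rwa [icompl_absorb he he₁] at h1
  · -- b₁ = join x (e₁ * icompl (e*e₁))
    have h1 : b₁ = join (b*e₁) (icompl e * e₁) := by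
      rw [hb₁ae₁, ha, join_mul b (icompl e) e₁ hcompat_b_ce]
    have h2 : icompl e * e₁ = e₁ * icompl (e*e₁) := by
      rw [idem_comm _ _ hce he₁, icompl_absorb he₁ he, idem_comm _ _ he₁ he]
    rw [h2, ← hxbe₁] at h1
    exact h1
end
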